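/- arXiv:2501.15869 — 2 statements merged into one kernel-verified Lean document; each statement's English description precedes it below -/
import Mathlib

section
/- Let q be a real number with 0 < q < 1, let k ≥ 1 be an integer, set f_k(n) = binom(n-1, k-1), and define a_{n,k}(q) by the recurrence a_{0,k}(q) = 1 and a_{n,k}(q) = f_k(n) + (1 - q^{n-1}) a_{n-1,k}(q) for n ≥ 1. Then lim_{n→∞} ( binom(n,k) - a_{n,k}(q) ) = ∑_{n=k}^∞ binom(n,k) q^n ∏_{j=n+1}^∞ (1 - q^j). -/
/-!
Writing `b n = binom(n, k) - a n`, Pascal's rule turns the recurrence for `a` into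
`b (n + 1) = (1 - q ^ n) * b n + binom(n, k) * q ^ n`. Unrolling it, and using that the factor
`1 - q ^ 0` kills the contribution of `b 0`, gives
`b N = ∑_{m < N} binom(m, k) q ^ m ∏_{m < j < N} (1 - q ^ j)`. Each summand tends to
`binom(m, k) q ^ m (q ^ (m + 1))_∞` and is bounded by the summable `binom(m, k) q ^ m`, so
dominated convergence for series gives the limit; the terms with `m < k` vanish.
-/

open Filter Finset Topology

theorem eq_prod_mul_add_sum_of_succ_eq_mul_add {R : Type*} [CommSemiring R] {x u c : ℕ → R}
    (h : ∀ n, x (n + 1) = u n * x n + c n) (N : ℕ) :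
    x N = (∏ j ∈ range N, u j) * x 0 + ∑ m ∈ range N, c m * ∏ j ∈ Ico (m + 1) N, u j := by
  induction N with
  | zero => simp
  | succ N ih =>
    have hsum : ∑ m ∈ range N, c m * ∏ j ∈ Ico (m + 1) (N + 1), u j =
        u N * ∑ m ∈ range N, c m * ∏ j ∈ Ico (m + 1) N, u j := by
      rw [mul_sum]
      refine sum_congr rfl fun m hm => ?_
      rw [prod_Ico_succ_top (by have := mem_range.1 hm; omega)]
      ring
    rw [h, ih, sum_range_succ, hsum, prod_range_succ, Ico_self, prod_empty]
    ring

section DominatedConvergence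

variable {R : Type*} [NormedCommRing R] [NormOneClass R] [CompleteSpace R]

theorem tendsto_sum_range_mul_prod_Ico {u c : ℕ → R} (hc : Summable fun m => ‖c m‖)
    (hu : ∀ j, ‖u j‖ ≤ 1) (hmul : ∀ m, Multipliable fun j => u (m + 1 + j)) :
    Tendsto (fun N => ∑ m ∈ range N, c m * ∏ j ∈ Ico (m + 1) N, u j) atTop
      (𝓝 (∑' m, c m * ∏' j, u (m + 1 + j))) := by
  set F : ℕ → ℕ → R := fun N m => if m < N then c m * ∏ j ∈ Ico (m + 1) N, u j else 0
  have hF_sum : ∀ N, ∑' m, F N m = ∑ m ∈ range N, c m * ∏ j ∈ Ico (m + 1) N, u j := fun N => by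
    rw [tsum_eq_sum (s := range N) fun m hm => if_neg (by simpa using hm)]
    exact sum_congr rfl fun m hm => if_pos (by simpa using hm)
  have hF_lim : ∀ m, Tendsto (F · m) atTop (𝓝 (c m * ∏' j, u (m + 1 + j))) := fun m => by
    refine (((hmul m).hasProd.tendsto_prod_nat.comp (tendsto_sub_atTop_nat (m + 1))).const_mul
      (c m)).congr' ?_
    filter_upwards [eventually_gt_atTop m] with N hN
    simp only [F, if_pos hN, Function.comp_apply, prod_Ico_eq_prod_range]
  have hF_le : ∀ N m, ‖F N m‖ ≤ ‖c m‖ := fun N m => by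
    simp only [F]
    split_ifs
    · calc ‖c m * ∏ j ∈ Ico (m + 1) N, u j‖
          ≤ ‖c m‖ * ∏ j ∈ Ico (m + 1) N, ‖u j‖ := (norm_mul_le _ _).trans
            (by gcongr; exact norm_prod_le _ _)
        _ ≤ ‖c m‖ * 1 := by
            gcongr; exact prod_le_one (fun _ _ => norm_nonneg _) fun j _ => hu j
        _ = ‖c m‖ := mul_one _
    · simp
  simpa only [hF_sum] using
    tendsto_tsum_of_dominated_convergence hc hF_lim (Eventually.of_forall hF_le)

end DominatedConvergence

section Geometric

variable {q : ℝ}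

theorem summable_norm_choose_mul_pow (k : ℕ) (hq : ‖q‖ < 1) :
    Summable fun m : ℕ => ‖(m.choose k : ℝ) * q ^ m‖ :=
  (summable_norm_pow_mul_geometric_of_norm_lt_one k hq).of_nonneg_of_le (fun _ => norm_nonneg _)
    fun m => by
      simp only [norm_mul, norm_pow, Real.norm_natCast]
      gcongr
      exact_mod_cast Nat.choose_le_pow m k

theorem multipliable_one_sub_pow_add (hq : ‖q‖ < 1) (s : ℕ) :
    Multipliable fun j : ℕ => 1 - q ^ (s + j) := by
  have hgeo : Summable fun j : ℕ => -q ^ (s + j) := by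
    simpa only [pow_add, neg_mul] using
      ((summable_geometric_of_norm_lt_one hq).mul_left (q ^ s)).neg
  simpa only [sub_eq_add_neg] using Real.multipliable_one_add_of_summable hgeo

theorem norm_one_sub_pow_le_one (hq0 : 0 ≤ q) (hq1 : q ≤ 1) (j : ℕ) : ‖1 - q ^ j‖ ≤ 1 := by
  have := pow_nonneg hq0 j
  have := pow_le_one₀ hq0 hq1 (n := j)
  rw [Real.norm_eq_abs, abs_le]
  constructor <;> linarith

end Geometric

theorem choose_sub_succ_of_recurrence {R : Type*} [CommRing R] {q : R} {k : ℕ} (hk : 1 ≤ k)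
    {a : ℕ → R} (ha : ∀ n : ℕ, a (n + 1) = (n.choose (k - 1) : R) + (1 - q ^ n) * a n) (n : ℕ) :
    ((n + 1).choose k : R) - a (n + 1) = (1 - q ^ n) * ((n.choose k : R) - a n) +
      (n.choose k : R) * q ^ n := by
  obtain ⟨k, rfl⟩ : ∃ k', k = k' + 1 := ⟨k - 1, by omega⟩
  rw [ha, Nat.choose_succ_succ', Nat.add_sub_cancel]
  push_cast
  ring

theorem limit_form_dilcher_general (q : ℝ) (hq0 : 0 < q) (hq1 : q < 1) (k : ℕ) (hk : 1 ≤ k)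
    (f : ℕ → ℝ) (hf : ∀ n : ℕ, f n = ((n - 1).choose (k - 1) : ℝ))
    (a : ℕ → ℝ)
    (ha : ∀ n : ℕ, a (n + 1) = f (n + 1) + (1 - q ^ n) * a n) :
    Filter.Tendsto (fun n : ℕ => (n.choose k : ℝ) - a n) Filter.atTop
      (nhds (∑' n : ℕ, ((k + n).choose k : ℝ) * q ^ (k + n) *
        ∏' j : ℕ, (1 - q ^ (k + n + 1 + j)))) := by
  have hq : ‖q‖ < 1 := by rwa [Real.norm_of_nonneg hq0.le]
  have hrec := choose_sub_succ_of_recurrence hk (q := q) (a := a) fun n => by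
    rw [ha, hf, Nat.add_sub_cancel]
  have hlim := tendsto_sum_range_mul_prod_Ico (summable_norm_choose_mul_pow k hq)
    (norm_one_sub_pow_le_one hq0.le hq1.le) fun m => multipliable_one_sub_pow_add hq (m + 1)
  have hterm_zero : ∀ m, m < k →
      (m.choose k : ℝ) * q ^ m * ∏' j : ℕ, (1 - q ^ (m + 1 + j)) = 0 := fun m hm => by
    simp [Nat.choose_eq_zero_of_lt hm]
  rw [← (add_right_injective k).tsum_eq fun m hm =>
    ⟨m - k, Nat.add_sub_of_le (not_lt.1 fun hlt => hm (hterm_zero m hlt))⟩] at hlim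
  refine hlim.congr' ?_
  filter_upwards [eventually_gt_atTop 0] with N hN
  rw [eq_prod_mul_add_sum_of_succ_eq_mul_add (x := fun n => (n.choose k : ℝ) - a n)
      (fun n => by rw [hrec, add_comm]) N,
    prod_eq_zero (mem_range.2 hN) (by simp), zero_mul, zero_add]

/-- Let `0 < q < 1`, `k ≥ 1`, `f_k(n) = binom(n-1, k-1)`, and let `a_{n,k}(q)` satisfy
`a_{0,k}(q) = 1`, `a_{n,k}(q) = f_k(n) + (1 - q^{n-1}) a_{n-1,k}(q)` for `n ≥ 1`. Then
`lim_{n→∞} (binom(n,k) - a_{n,k}(q)) = ∑_{n=k}^∞ binom(n,k) q^n (q^{n+1})_∞`. -/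
theorem limit_form_dilcher (q : ℝ) (hq0 : 0 < q) (hq1 : q < 1) (k : ℕ) (hk : 1 ≤ k)
    (f : ℕ → ℝ) (hf : ∀ n : ℕ, f n = ((n - 1).choose (k - 1) : ℝ))
    (a : ℕ → ℝ) (ha0 : a 0 = 1)
    (ha : ∀ n : ℕ, a (n + 1) = f (n + 1) + (1 - q ^ n) * a n) :
    Filter.Tendsto (fun n : ℕ => (n.choose k : ℝ) - a n) Filter.atTop
      (nhds (∑' n : ℕ, ((k + n).choose k : ℝ) * q ^ (k + n) *
        ∏' j : ℕ, (1 - q ^ (k + n + 1 + j)))) :=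
  limit_form_dilcher_general q hq0 hq1 k hk f hf a ha
end

section
/- Let q be a real number, and let n ≥ 1 and k ≥ 1 be integers. Then the k-th moment e_{n,k}(q) = ∑_{h=1}^n h^k q^{n-h} ∏_{j=1}^{h-1} (1 - q^{n-j}) satisfies e_{n,k}(q) = ∑_{ℓ=1}^k binom(k,ℓ) (-1)^{ℓ-1} n^{k-ℓ} a_{n,ℓ}(q), where a_{n,ℓ}(q) = ∑_{i=1}^n f_ℓ(i) ∏_{j=i}^{n-1} (1 - q^j) and f_ℓ(i) = ∑_{j=1}^ℓ binom(ℓ,j) (-1)^{j-1} i^{ℓ-j}. -/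
/-!
Write `P i = ∏_{j=i}^{n-1} (1 - q^j)`. Reflecting `h ↦ n + 1 - h`, the `h`-th probability
`q^{n-h} ∏_{j=1}^{h-1} (1 - q^{n-j})` becomes `q^{i-1} P i = P i - P (i-1)`, so summation by parts
(with `P 0 = 0`) gives `e_{n,k} = ∑_i ((n+1-i)^k - (n-i)^k) P i`. On the other side the binomial
theorem gives `f_ℓ(i) = i^ℓ - (i-1)^ℓ` and, summing over `ℓ`, the same coefficient
`(n-i+1)^k - (n-i)^k` of `P i`.
-/

/-- The `k`-th moment `e_{n,k}(q) = ∑_{h=1}^n h^k q^{n-h} ∏_{j=1}^{h-1} (1 - q^{n-j})`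
of the Simon–Crippa–Collenberg random variable `γ_n^*(1)`. -/
noncomputable def momentE (q : ℝ) (n k : ℕ) : ℝ :=
  ∑ h ∈ Finset.Icc 1 n, (h : ℝ) ^ k * q ^ (n - h) * ∏ j ∈ Finset.Icc 1 (h - 1), (1 - q ^ (n - j))

open Finset

section

variable {R : Type*} [CommRing R]

theorem sum_Icc_choose_mul_neg_one_pow_mul_pow (x y : R) (k : ℕ) :
    ∑ l ∈ Icc 1 k, (k.choose l : R) * (-1) ^ (l - 1) * x ^ (k - l) * y ^ l =
      x ^ k - (x - y) ^ k := by
  rw [sub_eq_neg_add x y, add_pow, sum_range_succ', ← Ico_add_one_right_eq_Icc,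
    sum_Ico_eq_sum_range, Nat.add_sub_cancel, pow_zero, Nat.sub_zero, Nat.choose_zero_right,
    Nat.cast_one, one_mul, mul_one, sub_add_cancel_right, ← sum_neg_distrib]
  refine sum_congr rfl fun l _ => ?_
  rw [add_comm 1 l, Nat.add_sub_cancel, neg_pow y, pow_succ]
  ring

theorem sum_Icc_choose_mul_neg_one_pow_mul_pow_sub_pow (x y z : R) (k : ℕ) :
    ∑ l ∈ Icc 1 k, (k.choose l : R) * (-1) ^ (l - 1) * x ^ (k - l) * (y ^ l - z ^ l) =
      (x - z) ^ k - (x - y) ^ k := by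
  simp only [mul_sub, sum_sub_distrib, sum_Icc_choose_mul_neg_one_pow_mul_pow]
  ring

theorem sum_Icc_mul_sub_pred (c P : ℕ → R) (m : ℕ) :
    ∑ i ∈ Icc 1 m, c i * (P i - P (i - 1)) =
      ∑ i ∈ Icc 1 m, (c i - c (i + 1)) * P i + c (m + 1) * P m - c 1 * P 0 := by
  induction m with
  | zero => simp
  | succ m ih =>
    rw [sum_Icc_succ_top (by omega), sum_Icc_succ_top (by omega), ih, Nat.add_sub_cancel]
    ring

theorem sum_Icc_one_reflect {M : Type*} [AddCommMonoid M] (F : ℕ → M) (n : ℕ) :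
    ∑ i ∈ Icc 1 n, F (n + 1 - i) = ∑ i ∈ Icc 1 n, F i :=
  sum_nbij' (fun i => n + 1 - i) (fun i => n + 1 - i)
    (fun _ hi => by simp only [mem_Icc] at *; omega)
    (fun _ hi => by simp only [mem_Icc] at *; omega)
    (fun _ hi => by simp only [mem_Icc] at hi; omega)
    (fun _ hi => by simp only [mem_Icc] at hi; omega)
    (fun _ _ => rfl)

def tailProd (q : R) (n i : ℕ) : R := ∏ j ∈ Icc i (n - 1), (1 - q ^ j)

theorem tailProd_zero (q : R) (n : ℕ) : tailProd q n 0 = 0 :=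
  prod_eq_zero (i := 0) (by simp) (by simp)

theorem tailProd_eq_mul_succ (q : R) {n i : ℕ} (h : i < n) :
    tailProd q n i = (1 - q ^ i) * tailProd q n (i + 1) := by
  rw [tailProd, ← insert_Icc_add_one_left_eq_Icc (by omega), prod_insert (by simp), tailProd]

theorem prod_Icc_one_sub_pow_sub_eq_tailProd (q : R) {n h : ℕ} (hh : h ≤ n) :
    ∏ j ∈ Icc 1 (h - 1), (1 - q ^ (n - j)) = tailProd q n (n + 1 - h) :=
  prod_nbij' (fun j => n - j) (fun j => n - j)
    (fun _ hi => by simp only [mem_Icc] at *; omega)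
    (fun _ hi => by simp only [mem_Icc] at *; omega)
    (fun _ hi => by simp only [mem_Icc] at hi; omega)
    (fun _ hi => by simp only [mem_Icc] at hi; omega)
    (fun _ _ => rfl)

end

theorem momentE_eq_sum_mul_tailProd_sub (q : ℝ) (n k : ℕ) :
    momentE q n k =
      ∑ i ∈ Icc 1 n, ((n : ℝ) + 1 - i) ^ k * (tailProd q n i - tailProd q n (i - 1)) := by
  rw [momentE, ← sum_Icc_one_reflect]
  refine sum_congr rfl fun i hi => ?_
  obtain ⟨hi1, hin⟩ := mem_Icc.mp hi
  rw [prod_Icc_one_sub_pow_sub_eq_tailProd q (by omega), Nat.cast_sub (by omega),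
    show n + 1 - (n + 1 - i) = i by omega, show n - (n + 1 - i) = i - 1 by omega,
    tailProd_eq_mul_succ q (show i - 1 < n by omega), Nat.sub_add_cancel hi1]
  push_cast
  ring

theorem momentE_eq_sum_pow_sub_pow_mul_tailProd (q : ℝ) (n : ℕ) {k : ℕ} (hk : k ≠ 0) :
    momentE q n k =
      ∑ i ∈ Icc 1 n, (((n : ℝ) + 1 - i) ^ k - ((n : ℝ) - i) ^ k) * tailProd q n i := by
  rw [momentE_eq_sum_mul_tailProd_sub, sum_Icc_mul_sub_pred, tailProd_zero]
  push_cast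
  simp [zero_pow hk, add_sub_add_right_eq_sub]

theorem moment_eq_sum_a_general (q : ℝ) (n k : ℕ) (hk : 1 ≤ k)
    (f : ℕ → ℕ → ℝ)
    (hf : ∀ l i : ℕ, f l i =
      ∑ j ∈ Finset.Icc 1 l, (l.choose j : ℝ) * (-1) ^ (j - 1) * (i : ℝ) ^ (l - j))
    (a : ℕ → ℕ → ℝ)
    (ha : ∀ m l : ℕ, a m l =
      ∑ i ∈ Finset.Icc 1 m, f l i * ∏ j ∈ Finset.Icc i (m - 1), (1 - q ^ j)) :
    momentE q n k =
      ∑ l ∈ Finset.Icc 1 k, (k.choose l : ℝ) * (-1) ^ (l - 1) * (n : ℝ) ^ (k - l) * a n l := by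
  have hf' : ∀ l i : ℕ, f l i = (i : ℝ) ^ l - ((i : ℝ) - 1) ^ l := fun l i => by
    simpa [hf] using sum_Icc_choose_mul_neg_one_pow_mul_pow (i : ℝ) 1 l
  rw [momentE_eq_sum_pow_sub_pow_mul_tailProd q n (by omega)]
  simp only [ha, hf', mul_sum]
  rw [sum_comm]
  refine sum_congr rfl fun i _ => ?_
  simp only [← mul_assoc, ← sum_mul]
  rw [sum_Icc_choose_mul_neg_one_pow_mul_pow_sub_pow, sub_sub_eq_add_sub, tailProd]

/-- For every real `q` and integers `n ≥ 1`, `k ≥ 1`,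
`e_{n,k}(q) = ∑_{ℓ=1}^k binom(k,ℓ) (-1)^{ℓ-1} n^{k-ℓ} a_{n,ℓ}(q)`, where
`a_{n,ℓ}(q) = ∑_{i=1}^n f_ℓ(i) ∏_{j=i}^{n-1} (1 - q^j)` and
`f_ℓ(i) = ∑_{j=1}^ℓ binom(ℓ,j) (-1)^{j-1} i^{ℓ-j}`. -/
theorem moment_eq_sum_a (q : ℝ) (n k : ℕ) (hn : 1 ≤ n) (hk : 1 ≤ k)
    (f : ℕ → ℕ → ℝ)
    (hf : ∀ l i : ℕ, f l i =
      ∑ j ∈ Finset.Icc 1 l, (l.choose j : ℝ) * (-1) ^ (j - 1) * (i : ℝ) ^ (l - j))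
    (a : ℕ → ℕ → ℝ)
    (ha : ∀ m l : ℕ, a m l =
      ∑ i ∈ Finset.Icc 1 m, f l i * ∏ j ∈ Finset.Icc i (m - 1), (1 - q ^ j)) :
    momentE q n k =
      ∑ l ∈ Finset.Icc 1 k, (k.choose l : ℝ) * (-1) ^ (l - 1) * (n : ℝ) ^ (k - l) * a n l :=
  moment_eq_sum_a_general q n k hk f hf a ha
end
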